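/- arXiv:math/0509687 — 3 statements merged into one kernel-verified Lean document; each statement's English description precedes it below -/
import Mathlib

section
/- If L is a unimodular lattice and ω, ω' are both characteristic vectors of L, then ⟨ω,ω⟩ ≡ ⟨ω',ω'⟩ mod 8. -/
/-- Halve a linear functional all of whose values are even. -/
def halfFun {M : Type*} [AddCommGroup M] [Module ℤ M]
    (f : M →ₗ[ℤ] ℤ) (h : ∀ m, 2 ∣ f m) : M →ₗ[ℤ] ℤ where
  toFun m := f m / 2
  map_add' x y := by
    obtain ⟨a, ha⟩ := h x
    obtain ⟨c, hc⟩ := h y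
    have hxy : f (x + y) = 2 * a + 2 * c := by rw [f.map_add, ha, hc]
    rw [hxy, ha, hc]; omega
  map_smul' c x := by
    obtain ⟨a, ha⟩ := h x
    simp only [RingHom.id_apply, smul_eq_mul, map_smul, ha]
    have h2 : 2 * a / 2 = a := by omega
    rw [h2]
    have h1 : c * (2 * a) = 2 * (c * a) := by ring
    rw [h1]
    omega

/-- In a unimodular lattice, any two characteristic vectors have norms
congruent mod 8. -/
theorem stmt13 {M : Type*} [AddCommGroup M] [Module ℤ M]
    [Module.Free ℤ M] [Module.Finite ℤ M]
    (b : M →ₗ[ℤ] M →ₗ[ℤ] ℤ) (hsym : ∀ x y, b x y = b y x)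
    (huni : Function.Bijective b)
    (ω ω' : M)
    (hω : ∀ η, b ω η ≡ b η η [ZMOD 2])
    (hω' : ∀ η, b ω' η ≡ b η η [ZMOD 2]) :
    b ω ω ≡ b ω' ω' [ZMOD 8] := by
  -- b (ω - ω') is even-valued
  have heven : ∀ m, 2 ∣ (b (ω - ω')) m := by
    intro m
    have h1 := hω m
    have h2 := hω' m
    have h3 : b ω m ≡ b ω' m [ZMOD 2] := h1.trans h2.symm
    have hd := Int.ModEq.dvd h3
    have h4 : b (ω - ω') m = b ω m - b ω' m := by simp [map_sub]
    rw [h4]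
    omega
  -- get x with ω - ω' = 2 • x
  obtain ⟨x, hx⟩ := huni.2 (halfFun (b (ω - ω')) heven)
  have hω_eq : ω - ω' = (2 : ℤ) • x := by
    apply huni.1
    ext m
    obtain ⟨a, ha⟩ := heven m
    have hxm : b x m = a := by
      have h5 : b x m = (halfFun (b (ω - ω')) heven) m := by rw [hx]
      rw [h5]
      simp only [halfFun, LinearMap.coe_mk, AddHom.coe_mk]
      omega
    have h6 : b ((2:ℤ) • x) m = 2 * b x m := by simp
    rw [h6, ha, hxm]
  have hωval : ω = ω' + (2 : ℤ) • x := by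
    rw [← hω_eq]; abel
  have expand : b ω ω = b ω' ω' + 4 * b ω' x + 4 * b x x := by
    rw [hωval]
    simp only [map_add, LinearMap.add_apply]
    have e1 : b ((2:ℤ) • x) ω' = 2 * b x ω' := by simp
    have e2 : b ω' ((2:ℤ) • x) = 2 * b ω' x := by simp
    have e3 : b ((2:ℤ) • x) ((2:ℤ) • x) = 4 * b x x := by simp; ring
    rw [e1, e2, e3, hsym x ω']
    ring
  have hchar := hω' x
  have hd : (2 : ℤ) ∣ b x x - b ω' x := Int.ModEq.dvd hchar
  have h8 : (8 : ℤ) ∣ b ω' ω' - b ω ω := by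
    rw [expand]
    obtain ⟨k, hk⟩ := hd
    have h7 : b ω' x = b x x - 2 * k := by omega
    rw [h7]; ring_nf; omega
  exact (Int.modEq_iff_dvd.mpr h8)
end

section
/- The image of the orthogonal complement of the embedding ι: E₈(2) ⊕ U(2) ⊕ U → E₈² ⊕ U³, ι(e,u,v) = (e,-e,u,-u,v), equals the image of the embedding j: E₈(2) ⊕ U(2) → E₈² ⊕ U³, j(e,u) = (e,e,u,u,0). That is, a vector x ∈ E₈² ⊕ U³ satisfies ⟨x, ι(w)⟩ = 0 for all w if and only if x = j(e,u) for some (e,u). -/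
/-- The Gram matrix of the negative definite `E₈` lattice. -/
def E8Gram : Matrix (Fin 8) (Fin 8) ℤ :=
  !![-2,  1,  0,  0,  0,  0,  0,  0;
      1, -2,  1,  0,  0,  0,  0,  0;
      0,  1, -2,  1,  0,  0,  0,  1;
      0,  0,  1, -2,  1,  0,  0,  0;
      0,  0,  0,  1, -2,  1,  0,  0;
      0,  0,  0,  0,  1, -2,  1,  0;
      0,  0,  0,  0,  0,  1, -2,  0;
      0,  0,  1,  0,  0,  0,  0, -2]

/-- The `E₈` form. -/
def e8Form (a b : Fin 8 → ℤ) : ℤ := ∑ i, ∑ j, a i * E8Gram i j * b j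

/-- The hyperbolic plane form on `ℤ²`. -/
def hypForm (u v : ℤ × ℤ) : ℤ := u.1 * v.2 + u.2 * v.1

/-- The underlying module of the K3 lattice `Λ = E₈² ⊕ U³`. -/
abbrev LambdaMod : Type :=
  (Fin 8 → ℤ) × (Fin 8 → ℤ) × (ℤ × ℤ) × (ℤ × ℤ) × (ℤ × ℤ)

/-- The form on `Λ = E₈² ⊕ U³`. -/
def formLambda (x y : LambdaMod) : ℤ :=
  e8Form x.1 y.1 + e8Form x.2.1 y.2.1 + hypForm x.2.2.1 y.2.2.1
    + hypForm x.2.2.2.1 y.2.2.2.1 + hypForm x.2.2.2.2 y.2.2.2.2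

/-- The embedding `ι : E₈(2) ⊕ U(2) ⊕ U → Λ`, `(e,u,v) ↦ (e,-e,u,-u,v)`. -/
def iotaMap (w : (Fin 8 → ℤ) × (ℤ × ℤ) × (ℤ × ℤ)) : LambdaMod :=
  (w.1, -w.1, w.2.1, -w.2.1, w.2.2)

/-- The embedding `j : E₈(2) ⊕ U(2) → Λ`, `(e,u) ↦ (e,e,u,u,0)`. -/
def jMap (w : (Fin 8 → ℤ) × (ℤ × ℤ)) : LambdaMod :=
  (w.1, w.1, w.2, w.2, 0)

set_option maxHeartbeats 1000000 in
open Matrix in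
lemma lat_cons_val_five {α} {m : ℕ} (x : α) (u : Fin (m+5) → α) :
    vecCons x u 5 = vecHead (vecTail (vecTail (vecTail (vecTail u)))) := rfl

open Matrix in
lemma lat_cons_val_six {α} {m : ℕ} (x : α) (u : Fin (m+6) → α) :
    vecCons x u 6 = vecHead (vecTail (vecTail (vecTail (vecTail (vecTail u))))) := rfl

open Matrix in
lemma lat_cons_val_seven {α} {m : ℕ} (x : α) (u : Fin (m+7) → α) :
    vecCons x u 7 = vecHead (vecTail (vecTail (vecTail (vecTail (vecTail (vecTail u)))))) := rfl

lemma e8_zero_right (a : Fin 8 → ℤ) : e8Form a 0 = 0 := by simp [e8Form]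

lemma e8_neg_right (a b : Fin 8 → ℤ) : e8Form a (-b) = - e8Form a b := by
  simp [e8Form, mul_neg, Finset.sum_neg_distrib]

lemma e8_sub_left (a b e : Fin 8 → ℤ) :
    e8Form (a - b) e = e8Form a e - e8Form b e := by
  simp [e8Form, sub_mul, Finset.sum_sub_distrib]

lemma hyp_neg_right (u p : ℤ × ℤ) : hypForm u (-p) = - hypForm u p := by
  simp [hypForm]; ring

lemma hyp_zero_left (q : ℤ × ℤ) : hypForm 0 q = 0 := by simp [hypForm]

lemma hyp_nondeg (s : ℤ × ℤ) (h : ∀ q, hypForm s q = 0) : s = 0 := by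
  have h1 := h (1, 0)
  have h2 := h (0, 1)
  simp [hypForm] at h1 h2
  exact Prod.ext h2 h1

set_option maxHeartbeats 1000000 in
lemma e8_nondeg (c : Fin 8 → ℤ) (h : ∀ e, e8Form c e = 0) : c = 0 := by
  have h0 := h (Pi.single 0 1)
  have h1 := h (Pi.single 1 1)
  have h2 := h (Pi.single 2 1)
  have h3 := h (Pi.single 3 1)
  have h4 := h (Pi.single 4 1)
  have h5 := h (Pi.single 5 1)
  have h6 := h (Pi.single 6 1)
  have h7 := h (Pi.single 7 1)
  simp [e8Form, E8Gram, Fin.sum_univ_eight, Pi.single_apply,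
    lat_cons_val_five, lat_cons_val_six, lat_cons_val_seven,
    Matrix.vecHead, Matrix.vecTail] at h0 h1 h2 h3 h4 h5 h6 h7
  have e0 : c 0 = 0 := by omega
  have e1 : c 1 = 0 := by omega
  have e2 : c 2 = 0 := by omega
  have e3 : c 3 = 0 := by omega
  have e4 : c 4 = 0 := by omega
  have e5 : c 5 = 0 := by omega
  have e6 : c 6 = 0 := by omega
  have e7 : c 7 = 0 := by omega
  funext i
  fin_cases i <;> simpa using ‹_›

/-- The orthogonal complement of the image of `ι` equals the image of `j`. -/
theorem stmt18 (x : LambdaMod) :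
    (∀ w : (Fin 8 → ℤ) × (ℤ × ℤ) × (ℤ × ℤ), formLambda x (iotaMap w) = 0) ↔
      ∃ w' : (Fin 8 → ℤ) × (ℤ × ℤ), jMap w' = x := by
  constructor
  · intro h
    obtain ⟨a, b, u, v, s⟩ := x
    have hs : s = 0 := by
      apply hyp_nondeg
      intro q
      have := h (0, 0, q)
      simpa [formLambda, iotaMap, e8_zero_right, hyp_zero_left, hypForm] using this
    have hab : a = b := by
      have key := e8_nondeg (a - b) (fun e => by
        have he := h (e, 0, 0)
        simp [formLambda, iotaMap, e8_neg_right, hypForm] at he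
        rw [e8_sub_left]
        omega)
      funext i
      have := congrFun key i
      simp [Pi.sub_apply] at this
      omega
    have huv : u = v := by
      have h1 := h (0, (1, 0), 0)
      have h2 := h (0, (0, 1), 0)
      simp [formLambda, iotaMap, e8_zero_right, hypForm] at h1 h2
      exact Prod.ext (by omega) (by omega)
    exact ⟨(a, u), by simp [jMap, hab, huv, hs]⟩
  · rintro ⟨⟨e, u⟩, rfl⟩
    intro w
    simp [formLambda, jMap, iotaMap, e8_neg_right, hyp_neg_right, hyp_zero_left]
end

section
/- Let ω = (a, b₁, b₂) ∈ B(2) ⊕ U be primitive with exactly one of b₁, b₂ even, and let ω' = (a', b₁', b₂') be primitive with b₁', b₂' both even. Then ω and ω' lie in different orbits of the isometry group O(B(2) ⊕ U): no isometry of B(2) ⊕ U maps ω to ω'. -/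
/-- A nonzero lattice vector `v` is primitive if `v = k • w` implies `k` is a unit. -/
def IsPrimitive {M : Type*} [AddCommGroup M] [Module ℤ M] (v : M) : Prop :=
  v ≠ 0 ∧ ∀ (k : ℤ) (w : M), v = k • w → IsUnit k

/-- The bilinear form on `Fin r → ℤ` given by a Gram matrix `G`. -/
def gramForm {r : ℕ} (G : Matrix (Fin r) (Fin r) ℤ) (a a' : Fin r → ℤ) : ℤ :=
  ∑ i, ∑ j, a i * G i j * a' j

/-- The form on `B(2) ⊕ U`: `2⟨a,a'⟩_B + b₁b₂' + b₂b₁'`. -/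
def formB2U {r : ℕ} (G : Matrix (Fin r) (Fin r) ℤ)
    (x y : (Fin r → ℤ) × ℤ × ℤ) : ℤ :=
  2 * gramForm G x.1 y.1 + x.2.1 * y.2.2 + x.2.2 * y.2.1

/-- If `ω = (a,b₁,b₂)` is primitive with exactly one of `b₁, b₂` even, and
`ω' = (a',b₁',b₂')` is primitive with `b₁', b₂'` both even, then no isometry of
`B(2) ⊕ U` (with `B` even unimodular) maps `ω` to `ω'`. -/
theorem stmt19 {r : ℕ} (G : Matrix (Fin r) (Fin r) ℤ)
    (hsym : G.IsSymm) (heven : ∀ i, Even (G i i))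
    (huni : G.det = 1 ∨ G.det = -1)
    (a a' : Fin r → ℤ) (b₁ b₂ b₁' b₂' : ℤ)
    (hp : IsPrimitive ((a, b₁, b₂) : (Fin r → ℤ) × ℤ × ℤ))
    (hex : (Even b₁ ∧ Odd b₂) ∨ (Odd b₁ ∧ Even b₂))
    (hp' : IsPrimitive ((a', b₁', b₂') : (Fin r → ℤ) × ℤ × ℤ))
    (he₁ : Even b₁') (he₂ : Even b₂')
    (g : ((Fin r → ℤ) × ℤ × ℤ) ≃ₗ[ℤ] ((Fin r → ℤ) × ℤ × ℤ))
    (hg : ∀ x y, formB2U G (g x) (g y) = formB2U G x y) :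
    g (a, b₁, b₂) ≠ (a', b₁', b₂') := by
  intro h
  -- The pairing of ω' with any vector is even
  have key : ∀ z : (Fin r → ℤ) × ℤ × ℤ, Even (formB2U G (a', b₁', b₂') z) := by
    intro z
    unfold formB2U
    have h1 : Even (b₁' * z.2.2) := he₁.mul_right _
    have h2 : Even (b₂' * z.2.1) := he₂.mul_right _
    exact ((even_two_mul _).add h1).add h2
  -- But the pairing of ω with a suitable z is odd
  rcases hex with ⟨hb₁, hb₂⟩ | ⟨hb₁, hb₂⟩
  · have hodd : Odd (formB2U G (a, b₁, b₂) ((0, 1, 0) : (Fin r → ℤ) × ℤ × ℤ)) := by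
      unfold formB2U gramForm
      simp only [Prod.fst, Prod.snd, mul_zero, mul_one, Finset.sum_const_zero,
        zero_mul, add_zero, zero_add]
      simpa using hb₂
    have := key (g ((0, 1, 0) : (Fin r → ℤ) × ℤ × ℤ))
    rw [← h, hg] at this
    exact (Int.not_odd_iff_even.mpr this) hodd
  · have hodd : Odd (formB2U G (a, b₁, b₂) ((0, 0, 1) : (Fin r → ℤ) × ℤ × ℤ)) := by
      unfold formB2U gramForm
      simp only [Prod.fst, Prod.snd, mul_zero, mul_one, Finset.sum_const_zero,
        zero_mul, add_zero, zero_add]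
      simpa using hb₁
    have := key (g ((0, 0, 1) : (Fin r → ℤ) × ℤ × ℤ))
    rw [← h, hg] at this
    exact (Int.not_odd_iff_even.mpr this) hodd
end
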